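/- The map sending a final type ν of length g to the Young type μ (where μ_j = #{i ≤ g : j ≤ i − ν_i}) is a bijection between final types of length g and strictly decreasing sequences of positive integers all at most g (equivalently, subsets of {1,...,g}). -/
import Mathlib

/-- A final type of length `g`, indexed so that `ν i` corresponds to `ν_{i+1}` in 1-indexed
notation: `ν 0 ≤ 1` and `ν i ≤ ν (i+1) ≤ ν i + 1` for consecutive indices. -/
def IsFinalTypeFin (g : ℕ) (ν : Fin g → ℕ) : Prop :=
  (∀ i : Fin g, (i : ℕ) = 0 → ν i ≤ 1) ∧
  (∀ i j : Fin g, (j : ℕ) = (i : ℕ) + 1 → ν i ≤ ν j ∧ ν j ≤ ν i + 1)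

/-- The Young type of a final type (with 1-indexed `i` given by `(i : ℕ) + 1`):
`μ j = #{i : 1 ≤ i ≤ g, j ≤ i - ν i}`. -/
def youngTypeFin (g : ℕ) (ν : Fin g → ℕ) (j : ℕ) : ℕ :=
  (Finset.univ.filter fun i : Fin g => j ≤ ((i : ℕ) + 1) - ν i).card

/-- A Young type for `g`: a strictly decreasing (on its nonzero part) weakly decreasing
sequence of nonnegative integers, all at most `g`, indexed from 1 (with `μ 0 = 0` as a
normalization). Equivalently, a subset of `{1, ..., g}`. -/
def IsYoungSeq (g : ℕ) (μ : ℕ → ℕ) : Prop :=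
  μ 0 = 0 ∧ μ 1 ≤ g ∧
  (∀ j, 1 ≤ j → μ (j + 1) ≤ μ j) ∧
  (∀ j, 1 ≤ j → 0 < μ (j + 1) → μ (j + 1) < μ j)

namespace FTAux

lemma card_filter_le (g c : ℕ) :
    (Finset.univ.filter fun i : Fin g => c ≤ (i : ℕ)).card = g - c := by
  have h : (Finset.univ.filter fun i : Fin g => c ≤ (i : ℕ)) =
      (Finset.Ico c g).attachFin (fun m hm => (Finset.mem_Ico.mp hm).2) := by
    ext i
    simp [Finset.mem_attachFin, Finset.mem_Ico, i.isLt]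
  rw [h, Finset.card_attachFin, Nat.card_Ico]

lemma upper_mem {g : ℕ} (S : Finset (Fin g))
    (hS : ∀ a ∈ S, ∀ b : Fin g, a ≤ b → b ∈ S) (i : Fin g) :
    i ∈ S ↔ g - S.card ≤ (i : ℕ) := by
  constructor
  · intro hi
    have hsub : (Finset.univ.filter fun b : Fin g => (i : ℕ) ≤ (b : ℕ)) ⊆ S := by
      intro b hb
      simp only [Finset.mem_filter, Finset.mem_univ, true_and] at hb
      exact hS i hi b hb
    have := Finset.card_le_card hsub
    rw [card_filter_le] at this
    omega
  · intro h
    by_contra hi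
    have hsub : S ⊆ Finset.univ.filter fun b : Fin g => (i : ℕ) + 1 ≤ (b : ℕ) := by
      intro b hb
      simp only [Finset.mem_filter, Finset.mem_univ, true_and]
      by_contra hle
      exact hi (hS b hb i (by omega))
    have := Finset.card_le_card hsub
    rw [card_filter_le] at this
    have := i.isLt
    omega

section FinalType

variable {g : ℕ} {ν : Fin g → ℕ} (hν : IsFinalTypeFin g ν)
include hν

/-- `ν i ≤ i + 1`. -/
lemma nu_le : ∀ (n : ℕ) (h : n < g), ν ⟨n, h⟩ ≤ n + 1 := by
  intro n
  induction n with
  | zero => intro h; have := hν.1 ⟨0, h⟩ rfl; omega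
  | succ n ih =>
    intro h
    have h' : n < g := by omega
    have := (hν.2 ⟨n, h'⟩ ⟨n + 1, h⟩ rfl).2
    have := ih h'
    omega

/-- The associated monotone function `f i = i + 1 - ν i`. -/
lemma f_step (n : ℕ) (h : n + 1 < g) :
    (n + 1) - ν ⟨n, by omega⟩ ≤ (n + 2) - ν ⟨n + 1, h⟩ ∧
    (n + 2) - ν ⟨n + 1, h⟩ ≤ ((n + 1) - ν ⟨n, by omega⟩) + 1 := by
  have h' : n < g := by omega
  have h1 := hν.2 ⟨n, h'⟩ ⟨n + 1, h⟩ rfl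
  have h2 := nu_le hν n h'
  have h3 := nu_le hν (n + 1) h
  constructor <;> omega

lemma f_mono : ∀ (d n : ℕ) (h : n + d < g),
    (n + 1) - ν ⟨n, by omega⟩ ≤ (n + d + 1) - ν ⟨n + d, h⟩ := by
  intro d
  induction d with
  | zero => intro n h; rfl
  | succ d ih =>
    intro n h
    have h' : n + d < g := by omega
    have h1 := ih n h'
    have h2 := (f_step hν (n + d) (by omega)).1
    calc (n + 1) - ν ⟨n, by omega⟩ ≤ (n + d + 1) - ν ⟨n + d, h'⟩ := h1
      _ ≤ (n + d + 2) - ν ⟨n + d + 1, by omega⟩ := h2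
      _ = (n + (d + 1) + 1) - ν ⟨n + (d + 1), h⟩ := by norm_num [Nat.add_assoc]

lemma f_mono' (a b : Fin g) (hab : a ≤ b) :
    ((a : ℕ) + 1) - ν a ≤ ((b : ℕ) + 1) - ν b := by
  obtain ⟨d, hd⟩ : ∃ d, (b : ℕ) = (a : ℕ) + d := ⟨b - a, by omega⟩
  have hb : b = ⟨(a : ℕ) + d, by omega⟩ := Fin.ext hd
  rw [hb]
  have := f_mono hν d (a : ℕ) (by omega)
  simpa using this

/-- Discrete intermediate value: the function `f` attains every value between
`f 0` and any attained value. -/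
lemma f_ivt (t : ℕ) (h0 : 0 < g) (ht0 : 1 - ν ⟨0, h0⟩ ≤ t) :
    ∀ (n : ℕ) (h : n < g), t ≤ (n + 1) - ν ⟨n, h⟩ →
      ∃ (m : ℕ) (hm : m < g), (m + 1) - ν ⟨m, hm⟩ = t := by
  intro n
  induction n with
  | zero => intro h hle; exact ⟨0, h, by omega⟩
  | succ n ih =>
    intro h hle
    have h' : n < g := by omega
    by_cases hc : t ≤ (n + 1) - ν ⟨n, h'⟩
    · exact ih h' hc
    · have := (f_step hν n h).2
      exact ⟨n + 1, h, by omega⟩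

end FinalType

end FTAux

open FTAux in
/-- The map `ν ↦ μ` is a bijection between final types of length `g` and Young types for `g`
(strictly decreasing sequences of positive integers at most `g`, i.e. subsets of `{1,...,g}`):
it is well defined, injective, and surjective. -/
theorem finalType_to_youngType_bijective (g : ℕ) :
    (∀ ν : Fin g → ℕ, IsFinalTypeFin g ν →
      IsYoungSeq g (fun j => if j = 0 then 0 else youngTypeFin g ν j)) ∧
    (∀ ν ν' : Fin g → ℕ, IsFinalTypeFin g ν → IsFinalTypeFin g ν' →
      (∀ j, 1 ≤ j → youngTypeFin g ν j = youngTypeFin g ν' j) → ν = ν') ∧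
    (∀ μ : ℕ → ℕ, IsYoungSeq g μ →
      ∃ ν : Fin g → ℕ, IsFinalTypeFin g ν ∧ ∀ j, 1 ≤ j → youngTypeFin g ν j = μ j) := by
  refine ⟨?_, ?_, ?_⟩
  · -- well-definedness
    intro ν hν
    refine ⟨rfl, ?_, ?_, ?_⟩
    · simp only [if_neg one_ne_zero]
      calc youngTypeFin g ν 1 ≤ (Finset.univ : Finset (Fin g)).card :=
            Finset.card_filter_le _ _
        _ = g := by simp
    · intro j hj
      simp only [if_neg (show j + 1 ≠ 0 by omega), if_neg (show j ≠ 0 by omega)]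
      apply Finset.card_le_card
      intro i hi
      simp only [Finset.mem_filter, Finset.mem_univ, true_and] at *
      omega
    · intro j hj hpos
      simp only [if_neg (show j + 1 ≠ 0 by omega)] at hpos
      simp only [if_neg (show j + 1 ≠ 0 by omega), if_neg (show j ≠ 0 by omega)]
      -- there is some i with f i ≥ j+1; by IVT some m with f m = j
      unfold youngTypeFin at hpos ⊢
      obtain ⟨i₀, hi₀⟩ := Finset.card_pos.mp hpos
      simp only [Finset.mem_filter, Finset.mem_univ, true_and] at hi₀
      have h0 : 0 < g := i₀.pos
      have ht0 : 1 - ν ⟨0, h0⟩ ≤ j := by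
        have := hν.1 ⟨0, h0⟩ rfl
        omega
      obtain ⟨m, hm, hfm⟩ := f_ivt hν j h0 ht0 i₀ i₀.isLt (by
        have : (⟨(i₀ : ℕ), i₀.isLt⟩ : Fin g) = i₀ := rfl
        rw [this]; omega)
      apply Finset.card_lt_card
      constructor
      · intro i hi
        simp only [Finset.mem_filter, Finset.mem_univ, true_and] at *
        omega
      · intro hsub
        have hmem : (⟨m, hm⟩ : Fin g) ∈
            Finset.univ.filter fun i : Fin g => j ≤ ((i : ℕ) + 1) - ν i := by
          simp only [Finset.mem_filter, Finset.mem_univ, true_and]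
          omega
        have := hsub hmem
        simp only [Finset.mem_filter, Finset.mem_univ, true_and] at this
        omega
  · -- injectivity
    intro ν ν' hν hν' hμ
    funext i
    -- show f i = f' i where f i = i+1 - ν i
    suffices hf : ((i : ℕ) + 1) - ν i = ((i : ℕ) + 1) - ν' i by
      have h1 := nu_le hν i i.isLt
      have h2 := nu_le hν' i i.isLt
      simp only [Fin.eta] at h1 h2
      omega
    have key : ∀ j, 1 ≤ j → (j ≤ ((i : ℕ) + 1) - ν i ↔ j ≤ ((i : ℕ) + 1) - ν' i) := by
      intro j hj
      have hu : ∀ (τ : Fin g → ℕ), IsFinalTypeFin g τ → ∀ a ∈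
          (Finset.univ.filter fun b : Fin g => j ≤ ((b : ℕ) + 1) - τ b),
          ∀ b : Fin g, a ≤ b →
          b ∈ (Finset.univ.filter fun b : Fin g => j ≤ ((b : ℕ) + 1) - τ b) := by
        intro τ hτ a ha b hab
        simp only [Finset.mem_filter, Finset.mem_univ, true_and] at *
        exact le_trans ha (f_mono' hτ a b hab)
      have e1 := upper_mem _ (hu ν hν) i
      have e2 := upper_mem _ (hu ν' hν') i
      simp only [Finset.mem_filter, Finset.mem_univ, true_and] at e1 e2
      have hc : (Finset.univ.filter fun b : Fin g => j ≤ ((b : ℕ) + 1) - ν b).card =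
          (Finset.univ.filter fun b : Fin g => j ≤ ((b : ℕ) + 1) - ν' b).card :=
        hμ j hj
      rw [e1, e2, hc]
    have h1 := nu_le hν i i.isLt
    have h2 := nu_le hν' i i.isLt
    simp only [Fin.eta] at h1 h2
    by_cases hz : ((i : ℕ) + 1) - ν i = 0
    · by_cases hz' : ((i : ℕ) + 1) - ν' i = 0
      · omega
      · have := (key _ (by omega)).mpr (le_refl (((i : ℕ) + 1) - ν' i))
        omega
    · have := (key _ (by omega)).mp (le_refl (((i : ℕ) + 1) - ν i))
      by_cases hz' : ((i : ℕ) + 1) - ν' i = 0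
      · have := (key _ (by omega)).mp (le_refl (((i : ℕ) + 1) - ν i))
        omega
      · have := (key _ (by omega)).mpr (le_refl (((i : ℕ) + 1) - ν' i))
        omega
  · -- surjectivity
    intro μ hμ
    obtain ⟨hμ0, hμ1, hmono, hstrict⟩ := hμ
    -- μ is antitone on [1, ∞)
    have hanti : ∀ j₁ j₂, 1 ≤ j₁ → j₁ ≤ j₂ → μ j₂ ≤ μ j₁ := by
      intro j₁ j₂ h1 h12
      induction j₂, h12 using Nat.le_induction with
      | base => exact le_rfl
      | succ j₂ hj₂ ih => exact le_trans (hmono j₂ (by omega)) ih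
    -- positive values decrease strictly from μ 1
    have hkey : ∀ j, 1 ≤ j → 0 < μ j → μ j + j ≤ μ 1 + 1 := by
      intro j
      induction j with
      | zero => omega
      | succ j ih =>
        intro _ hpos
        by_cases hj : 1 ≤ j
        · have h1 := hstrict j hj hpos
          have h2 := ih hj (by omega)
          omega
        · have hj0 : j = 0 := by omega
          subst hj0
          simp
    have hzero : ∀ j, g < j → μ j = 0 := by
      intro j hj
      by_contra hpos
      have h1 : 1 ≤ j := by omega
      have := hkey j h1 (by omega)
      omega
    -- the auxiliary function F
    set F : ℕ → ℕ := fun n => ((Finset.Icc 1 g).filter fun j => g - μ j ≤ n).card with hF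
    have hFmono : ∀ n₁ n₂, n₁ ≤ n₂ → F n₁ ≤ F n₂ := by
      intro n₁ n₂ h
      apply Finset.card_le_card
      intro j hj
      simp only [Finset.mem_filter, Finset.mem_Icc] at *
      omega
    have hF0 : F 0 ≤ 1 := by
      simp only [hF]
      have : ((Finset.Icc 1 g).filter fun j => g - μ j ≤ 0) ⊆ {1} := by
        intro j hj
        simp only [Finset.mem_filter, Finset.mem_Icc] at hj
        simp only [Finset.mem_singleton]
        by_contra hne
        have hj2 : 2 ≤ j := by omega
        have hg1 : 1 ≤ g := by omega
        have hpos : 0 < μ j := by omega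
        have := hkey j (by omega) hpos
        omega
      calc _ ≤ ({1} : Finset ℕ).card := Finset.card_le_card this
        _ = 1 := rfl
    have hFstep : ∀ n, n + 2 ≤ g → F (n + 1) ≤ F n + 1 := by
      intro n hn
      have hsub : ((Finset.Icc 1 g).filter fun j => g - μ j ≤ n + 1) ⊆
          ((Finset.Icc 1 g).filter fun j => g - μ j ≤ n) ∪
          ((Finset.Icc 1 g).filter fun j => g - μ j = n + 1) := by
        intro j hj
        simp only [Finset.mem_filter, Finset.mem_union, Finset.mem_Icc] at *
        omega
      have hD : ((Finset.Icc 1 g).filter fun j => g - μ j = n + 1).card ≤ 1 := by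
        apply Finset.card_le_one.mpr
        intro a ha b hb
        simp only [Finset.mem_filter, Finset.mem_Icc] at ha hb
        have hva : μ a = g - (n + 1) := by omega
        have hvb : μ b = g - (n + 1) := by omega
        have hvpos : 0 < g - (n + 1) := by omega
        by_contra hne
        -- wlog a < b
        rcases Nat.lt_or_ge a b with hab | hab
        · have h1 : μ (a + 1) < μ a := by
            apply hstrict a (by omega)
            calc 0 < g - (n+1) := hvpos
              _ = μ b := hvb.symm
              _ ≤ μ (a + 1) := hanti (a+1) b (by omega) (by omega)
          have h2 : μ b ≤ μ (a + 1) := hanti (a+1) b (by omega) (by omega)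
          omega
        · have hba : b < a := by omega
          have h1 : μ (b + 1) < μ b := by
            apply hstrict b (by omega)
            calc 0 < g - (n+1) := hvpos
              _ = μ a := hva.symm
              _ ≤ μ (b + 1) := hanti (b+1) a (by omega) (by omega)
          have h2 : μ a ≤ μ (b + 1) := hanti (b+1) a (by omega) (by omega)
          omega
      calc F (n + 1) ≤ _ := Finset.card_le_card hsub
        _ ≤ _ + _ := Finset.card_union_le _ _
        _ ≤ F n + 1 := by simp only [hF]; omega
    have hFbound : ∀ n, n < g → F n ≤ n + 1 := by
      intro n
      induction n with
      | zero => intro _; exact hF0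
      | succ n ih =>
        intro h
        have := hFstep n (by omega)
        have := ih (by omega)
        omega
    -- key equivalence
    have hFiff : ∀ j n, 1 ≤ j → j ≤ g → (j ≤ F n ↔ g - μ j ≤ n) := by
      intro j n hj1 hjg
      constructor
      · intro hle
        by_contra hc
        have hsub : ((Finset.Icc 1 g).filter fun j' => g - μ j' ≤ n) ⊆ Finset.Icc 1 (j - 1) := by
          intro j' hj'
          simp only [Finset.mem_filter, Finset.mem_Icc] at *
          refine ⟨hj'.1.1, ?_⟩
          by_contra hge
          have : μ j' ≤ μ j := hanti j j' hj1 (by omega)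
          omega
        have := Finset.card_le_card hsub
        rw [Nat.card_Icc] at this
        simp only [hF] at hle
        omega
      · intro hle
        have hsub : Finset.Icc 1 j ⊆ ((Finset.Icc 1 g).filter fun j' => g - μ j' ≤ n) := by
          intro j' hj'
          simp only [Finset.mem_filter, Finset.mem_Icc] at *
          refine ⟨⟨hj'.1, by omega⟩, ?_⟩
          have : μ j ≤ μ j' := hanti j' j hj'.1 hj'.2
          omega
        have := Finset.card_le_card hsub
        rw [Nat.card_Icc] at this
        simp only [hF]
        omega
    -- define ν
    refine ⟨fun i => (i : ℕ) + 1 - F i, ?_, ?_⟩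
    · constructor
      · intro i hi
        simp only [hi]
        omega
      · intro i j hij
        have h1 : (i : ℕ) + 2 ≤ g := by have := j.isLt; omega
        have h2 := hFstep i (by omega)
        have h3 := hFmono i (i + 1) (by omega)
        have h4 := hFbound i (by omega)
        have h5 := hFbound ((i : ℕ) + 1) (by omega)
        simp only [hij]
        constructor <;> omega
    · intro j hj
      have hfeq : ∀ i : Fin g, ((i : ℕ) + 1) - ((i : ℕ) + 1 - F i) = F i := by
        intro i
        have := hFbound i i.isLt
        omega
      unfold youngTypeFin
      simp only [hfeq]
      by_cases hjg : j ≤ g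
      · have heq : (Finset.univ.filter fun i : Fin g => j ≤ F (i : ℕ)) =
            (Finset.univ.filter fun i : Fin g => g - μ j ≤ (i : ℕ)) := by
          ext i
          simp only [Finset.mem_filter, Finset.mem_univ, true_and]
          exact hFiff j i hj hjg
        rw [heq, card_filter_le]
        have : μ j ≤ g := le_trans (hanti 1 j le_rfl hj) hμ1
        omega
      · have heq : (Finset.univ.filter fun i : Fin g => j ≤ F (i : ℕ)) = ∅ := by
          apply Finset.filter_eq_empty_iff.mpr
          intro i _
          have := hFbound i i.isLt
          have := i.isLt
          omega
        rw [heq, hzero j (by omega)]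
        rfl
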